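/- arXiv:math/0606658 — 2 statements merged into one kernel-verified Lean document; each statement's English description precedes it below -/
import Mathlib

section
/- With B₁, B₂, A₁, A₂ defined over a field K, if (σ₁, σ₂, σ₃, σ₄) ≠ (0, 0, 0, 0), then the c × (2c+2) block matrix β = (B₁ | B₂) has maximal rank c; that is, the associated linear map K^{2c+2} → K^c is surjective. -/
/-!
Deleting the last (resp. first) column of `B = monadB σ₁ σ₂ c` leaves a square triangular
matrix with constant diagonal `σ₁` (resp. `σ₂`), which is invertible as soon as that entry is
nonzero; so `B` is surjective whenever `(σ₁, σ₂) ≠ 0`. A block row `(B₁ | B₂)` is surjective as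
soon as one of its blocks is, and `(σ₁, σ₂, σ₃, σ₄) ≠ 0` makes one of `(σ₁, σ₂)`, `(σ₃, σ₄)`
nonzero.
-/

open Matrix

/-- The `c × (c+1)` banded matrix with `σ₁` on the main diagonal and `σ₂` on the
superdiagonal: `(B₁)_{i,j} = σ₁` if `j = i`, `σ₂` if `j = i+1`, `0` otherwise. -/
def monadB {K : Type*} [Field K] (σ₁ σ₂ : K) (c : ℕ) :
    Matrix (Fin c) (Fin (c + 1)) K :=
  Matrix.of fun i j =>
    if (j : ℕ) = (i : ℕ) then σ₁ else if (j : ℕ) = (i : ℕ) + 1 then σ₂ else 0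

namespace Matrix

variable {m n n₁ n₂ R : Type*}

theorem mulVec_surjective_of_submatrix [Fintype m] [Fintype n] [DecidableEq n] [Semiring R]
    (M : Matrix m n R) (e : m → n)
    (h : Function.Surjective (M.submatrix id e).mulVec) : Function.Surjective M.mulVec := by
  intro y
  obtain ⟨v, rfl⟩ := h y
  refine ⟨(1 : Matrix n n R).submatrix id e *ᵥ v, ?_⟩
  rw [mulVec_mulVec]
  exact congrArg (· *ᵥ v) (mul_submatrix_one (Equiv.refl n) e M)

theorem mulVec_surjective_fromCols_of_left [Fintype n₁] [Fintype n₂] [Semiring R]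
    (A₁ : Matrix m n₁ R) (A₂ : Matrix m n₂ R) (h : Function.Surjective A₁.mulVec) :
    Function.Surjective (fromCols A₁ A₂).mulVec := by
  intro y
  obtain ⟨v, rfl⟩ := h y
  exact ⟨Sum.elim v 0, by simp⟩

theorem mulVec_surjective_fromCols_of_right [Fintype n₁] [Fintype n₂] [Semiring R]
    (A₁ : Matrix m n₁ R) (A₂ : Matrix m n₂ R) (h : Function.Surjective A₂.mulVec) :
    Function.Surjective (fromCols A₁ A₂).mulVec := by
  intro y
  obtain ⟨v, rfl⟩ := h y
  exact ⟨Sum.elim 0 v, by simp⟩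

section Triangular

variable [Fintype m] [DecidableEq m] [LinearOrder m] [CommRing R] {M : Matrix m m R}

theorem IsUpperTriangular.mulVec_surjective (hM : M.IsUpperTriangular)
    (hdiag : ∀ i, IsUnit (M i i)) : Function.Surjective M.mulVec := by
  rw [mulVec_surjective_iff_isUnit, isUnit_iff_isUnit_det, det_of_isUpperTriangular hM]
  exact IsUnit.prod_univ_iff.2 hdiag

theorem IsLowerTriangular.mulVec_surjective (hM : M.IsLowerTriangular)
    (hdiag : ∀ i, IsUnit (M i i)) : Function.Surjective M.mulVec := by
  rw [mulVec_surjective_iff_isUnit, isUnit_iff_isUnit_det, det_of_isLowerTriangular M hM]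
  exact IsUnit.prod_univ_iff.2 hdiag

end Triangular

end Matrix

section MonadB

variable {K : Type*} [Field K] (σ₁ σ₂ : K) (c : ℕ)

theorem monadB_submatrix_castSucc_isUpperTriangular :
    ((monadB σ₁ σ₂ c).submatrix id Fin.castSucc).IsUpperTriangular := by
  intro i j hji
  have : (j : ℕ) < i := hji
  simp only [submatrix_apply, id, monadB, of_apply, Fin.val_castSucc]
  rw [if_neg (by omega), if_neg (by omega)]

theorem monadB_submatrix_succ_isLowerTriangular :
    ((monadB σ₁ σ₂ c).submatrix id Fin.succ).IsLowerTriangular := by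
  intro i j hij
  have : (i : ℕ) < j := hij
  simp only [submatrix_apply, id, monadB, of_apply, Fin.val_succ]
  rw [if_neg (by omega), if_neg (by omega)]

theorem monadB_mulVec_surjective (h : σ₁ ≠ 0 ∨ σ₂ ≠ 0) :
    Function.Surjective (monadB σ₁ σ₂ c).mulVec := by
  rcases h with h₁ | h₂
  · refine mulVec_surjective_of_submatrix _ Fin.castSucc
      ((monadB_submatrix_castSucc_isUpperTriangular σ₁ σ₂ c).mulVec_surjective fun i => ?_)
    simpa [monadB] using h₁
  · refine mulVec_surjective_of_submatrix _ Fin.succ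
      ((monadB_submatrix_succ_isLowerTriangular σ₁ σ₂ c).mulVec_surjective fun i => ?_)
    simpa [monadB] using h₂

end MonadB

theorem monad_beta_surjective_general {K : Type*} [Field K] (σ₁ σ₂ σ₃ σ₄ : K)
    (h : (σ₁, σ₂, σ₃, σ₄) ≠ (0, 0, 0, 0)) (c : ℕ) :
    Function.Surjective
      (Matrix.mulVecLin
        (Matrix.fromCols (monadB σ₁ σ₂ c) (monadB σ₃ σ₄ c))) := by
  have hσ : (σ₁ ≠ 0 ∨ σ₂ ≠ 0) ∨ (σ₃ ≠ 0 ∨ σ₄ ≠ 0) := by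
    contrapose! h
    simp [h.1.1, h.1.2, h.2.1, h.2.2]
  rw [coe_mulVecLin]
  rcases hσ with h₁₂ | h₃₄
  · exact mulVec_surjective_fromCols_of_left _ _ (monadB_mulVec_surjective σ₁ σ₂ c h₁₂)
  · exact mulVec_surjective_fromCols_of_right _ _ (monadB_mulVec_surjective σ₃ σ₄ c h₃₄)

/-- if `(σ₁, σ₂, σ₃, σ₄) ≠ (0, 0, 0, 0)`, then the `c × (2c+2)`
block matrix `β = (B₁ | B₂)` has maximal rank `c`; that is, the associated
linear map `K^{2c+2} → K^c` is surjective. -/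
theorem monad_beta_surjective {K : Type*} [Field K] (σ₁ σ₂ σ₃ σ₄ : K)
    (h : (σ₁, σ₂, σ₃, σ₄) ≠ (0, 0, 0, 0)) (c : ℕ) (hc : 1 ≤ c) :
    Function.Surjective
      (Matrix.mulVecLin
        (Matrix.fromCols (monadB σ₁ σ₂ c) (monadB σ₃ σ₄ c))) :=
  monad_beta_surjective_general σ₁ σ₂ σ₃ σ₄ h c
end

section
/- With B₁, B₂, A₁, A₂ defined over a field K, if (σ₁, σ₂, σ₃, σ₄) ≠ (0, 0, 0, 0), then the (2c+2) × c block matrix α = (A₂ ; −A₁) (A₂ stacked on top of −A₁) has maximal rank c; that is, the associated linear map K^c → K^{2c+2} is injective. -/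
open Matrix

/-- The `(c+1) × c` banded matrix with `σ₂` on the main diagonal and `σ₁` on the
subdiagonal: `(A₁)_{i,j} = σ₂` if `i = j`, `σ₁` if `i = j+1`, `0` otherwise. -/
def monadA {K : Type*} [Field K] (σ₁ σ₂ : K) (c : ℕ) :
    Matrix (Fin (c + 1)) (Fin c) K :=
  Matrix.of fun i j =>
    if (i : ℕ) = (j : ℕ) then σ₂ else if (i : ℕ) = (j : ℕ) + 1 then σ₁ else 0

/-- If the diagonal entry `σ₂` is nonzero, kernel vectors of `monadA` vanish
(upward induction). -/
lemma monadA_ker_of_diag {K : Type*} [Field K] (σ₁ σ₂ : K) (h2 : σ₂ ≠ 0) (c : ℕ)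
    (v : Fin c → K) (hv : (monadA σ₁ σ₂ c).mulVec v = 0) : v = 0 := by
  have key : ∀ n, ∀ hn : n < c, v ⟨n, hn⟩ = 0 := by
    intro n
    induction n using Nat.strong_induction_on with
    | _ n ih =>
      intro hn
      have h0 := congrFun hv ⟨n, hn.trans (Nat.lt_succ_self c)⟩
      rw [mulVec, dotProduct] at h0
      rw [Finset.sum_eq_single (⟨n, hn⟩ : Fin c)] at h0
      · simp only [monadA, of_apply, if_pos rfl] at h0
        exact (mul_eq_zero.mp h0).resolve_left h2
      · intro j _ hj
        simp only [monadA, of_apply]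
        rcases eq_or_ne n (j : ℕ) with hnj | hnj
        · exact absurd (Fin.ext hnj.symm) hj
        · rw [if_neg hnj]
          rcases eq_or_ne n ((j : ℕ) + 1) with hnj1 | hnj1
          · rw [if_pos hnj1]
            have : v j = 0 := by
              have := ih (j : ℕ) (by omega) j.isLt
              simpa using this
            rw [this, mul_zero]
          · rw [if_neg hnj1, zero_mul]
      · intro habs
        exact absurd (Finset.mem_univ _) habs
  funext j
  have := key (j : ℕ) j.isLt
  simpa using this

/-- If the subdiagonal entry `σ₁` is nonzero, kernel vectors of `monadA` vanish
(downward induction). -/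
lemma monadA_ker_of_sub {K : Type*} [Field K] (σ₁ σ₂ : K) (h1 : σ₁ ≠ 0) (c : ℕ)
    (v : Fin c → K) (hv : (monadA σ₁ σ₂ c).mulVec v = 0) : v = 0 := by
  have key : ∀ m, ∀ j : Fin c, c - 1 - (j : ℕ) ≤ m → v j = 0 := by
    intro m
    induction m using Nat.strong_induction_on with
    | _ m ih =>
      intro j hj
      have h0 := congrFun hv ⟨(j : ℕ) + 1, by omega⟩
      rw [mulVec, dotProduct] at h0
      rw [Finset.sum_eq_single j] at h0
      · have hentry : monadA σ₁ σ₂ c ⟨(j : ℕ) + 1, by omega⟩ j = σ₁ := by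
          simp only [monadA, of_apply]
          simp
        rw [hentry, Pi.zero_apply] at h0
        exact (mul_eq_zero.mp h0).resolve_left h1
      · intro j' _ hj'
        simp only [monadA, of_apply]
        rcases eq_or_ne ((j : ℕ) + 1) (j' : ℕ) with he | he
        · rw [if_pos he]
          have hjlt : (j : ℕ) < (j' : ℕ) := by omega
          have hm : c - 1 - (j' : ℕ) < m := by
            have : (j' : ℕ) < c := j'.isLt
            omega
          rw [ih (c - 1 - (j' : ℕ)) hm j' le_rfl, mul_zero]
        · rw [if_neg he]
          rw [if_neg (by intro habs; exact hj' (Fin.ext (by omega))), zero_mul]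
      · intro habs
        exact absurd (Finset.mem_univ _) habs
  funext j
  exact key (c - 1 - (j : ℕ)) j le_rfl

/-- if `(σ₁, σ₂, σ₃, σ₄) ≠ (0, 0, 0, 0)`, then the `(2c+2) × c`
block matrix `α = (A₂ ; −A₁)` (`A₂` stacked on top of `−A₁`) has maximal rank
`c`; that is, the associated linear map `K^c → K^{2c+2}` is injective. -/
theorem monad_alpha_injective {K : Type*} [Field K] (σ₁ σ₂ σ₃ σ₄ : K)
    (h : (σ₁, σ₂, σ₃, σ₄) ≠ (0, 0, 0, 0)) (c : ℕ) (hc : 1 ≤ c) :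
    Function.Injective
      (Matrix.mulVecLin
        (Matrix.fromRows (monadA σ₃ σ₄ c) (-(monadA σ₁ σ₂ c)))) := by
  rw [injective_iff_map_eq_zero]
  intro v hv
  rw [mulVecLin_apply, fromRows_mulVec] at hv
  have hv1 : (monadA σ₃ σ₄ c).mulVec v = 0 := by
    funext i; exact congrFun hv (Sum.inl i)
  have hv2 : (monadA σ₁ σ₂ c).mulVec v = 0 := by
    have : (-(monadA σ₁ σ₂ c)).mulVec v = 0 := by
      funext i; exact congrFun hv (Sum.inr i)
    rw [neg_mulVec, neg_eq_zero] at this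
    exact this
  by_cases h4 : σ₄ ≠ 0
  · exact monadA_ker_of_diag σ₃ σ₄ h4 c v hv1
  by_cases h3 : σ₃ ≠ 0
  · exact monadA_ker_of_sub σ₃ σ₄ h3 c v hv1
  by_cases h2 : σ₂ ≠ 0
  · exact monadA_ker_of_diag σ₁ σ₂ h2 c v hv2
  by_cases h1 : σ₁ ≠ 0
  · exact monadA_ker_of_sub σ₁ σ₂ h1 c v hv2
  push_neg at h1 h2 h3 h4
  exact absurd (by rw [h1, h2, h3, h4]) h
end
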